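/- Let n ≥ 2, x ∈ T^n, j ∈ {1,...,n}, and μ a Borel probability measure on T^n. Then lim_{s→0+} [T^2_μ(x + s e^j) − 2 T^2_μ(x) + T^2_μ(x − s e^j)]/s = −2 μ(H(x + (1/2)e^j, j)). -/

import Mathlib

open MeasureTheory Filter

/-- The `p`-Wasserstein distance with cost function `c` (the distance of the
underlying space): infimum over couplings of `∫ c(x,y)^p dπ`, to the power `1/p`. -/
noncomputable def wassersteinDist {X : Type*} [MeasurableSpace X]
    (c : X → X → ℝ) (p : ℝ) (μ ν : Measure X) : ℝ :=
  sInf {r : ℝ | ∃ π : Measure (X × X), IsProbabilityMeasure π ∧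
      π.map Prod.fst = μ ∧ π.map Prod.snd = ν ∧
      r = ∫ q, c q.1 q.2 ^ p ∂π} ^ (1 / p)

/-- The flat `n`-dimensional torus `ℝ^n/ℤ^n`. -/
abbrev Torus (n : ℕ) := Fin n → AddCircle (1 : ℝ)

/-- The flat (ℓ²) metric on the torus: each coordinate distance is the
distance `|(x_k - y_k) mod 1|` on `ℝ/ℤ`. -/
noncomputable def torusDist {n : ℕ} (x y : Torus n) : ℝ :=
  Real.sqrt (∑ k, dist (x k) (y k) ^ 2)

/-- The `p`-Wasserstein potential of `μ` at `x`: `T^p_μ(x) = ∫ ϱ(x,y)^p dμ(y)`. -/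
noncomputable def torusPotential {n : ℕ} (p : ℝ) (μ : MeasureTheory.Measure (Torus n))
    (x : Torus n) : ℝ :=
  ∫ y, torusDist x y ^ p ∂μ

/-- The point `x + s·e^j` on the torus. -/
noncomputable def torusShift {n : ℕ} (x : Torus n) (j : Fin n) (s : ℝ) : Torus n :=
  fun i => if i = j then x i + ((s : ℝ) : AddCircle (1 : ℝ)) else x i

/-- The "hyperplane" `H(z,j) = {y : y_j = z_j}`. -/
def torusHyperplane {n : ℕ} (z : Torus n) (j : Fin n) : Set (Torus n) :=
  {y | y j = z j}

/-- The flat distance on `𝕋^{n-1}` between `x̌_j` and `y̌_j`, the points obtained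
from `x` and `y` by dropping the `j`-th coordinate. -/
noncomputable def torusDistDrop {n : ℕ} (j : Fin n) (x y : Torus n) : ℝ :=
  Real.sqrt (∑ i ∈ Finset.univ.erase j, dist (x i) (y i) ^ 2)

/-!
Since `ϱ(x, y)²` is a sum over coordinates, moving `x` along `e^j` changes only the `j`-th
term, so the second difference of `T²_μ` is the integral of the second difference of
`t ↦ ‖t - c‖²` on the circle `ℝ/ℤ`, with `c = y_j - x_j`. That one-dimensional second
difference is bounded by `2s`, and divided by `s` it tends to `0` unless `c = 1/2`, where the
squared distance has a concave kink and the limit is `-2`. Dominated convergence finishes.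
-/

open Topology

local notation "𝕋" => AddCircle (1 : ℝ)

namespace AddCircle

lemma norm_coe_one_eq_abs {r : ℝ} (hr : |r| ≤ 1 / 2) : ‖(r : 𝕋)‖ = |r| :=
  (norm_coe_eq_abs_iff 1 one_ne_zero).mpr (by rwa [abs_one])

lemma norm_one_le_half (c : 𝕋) : ‖c‖ ≤ 1 / 2 := by
  simpa using norm_le_half_period 1 (x := c) one_ne_zero

noncomputable def secondDiffNormSq (c : 𝕋) (s : ℝ) : ℝ :=
  ‖(s : 𝕋) - c‖ ^ 2 - 2 * ‖c‖ ^ 2 + ‖((-s : ℝ) : 𝕋) - c‖ ^ 2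

lemma continuous_secondDiffNormSq (s : ℝ) : Continuous (secondDiffNormSq · s) := by
  unfold secondDiffNormSq; fun_prop

lemma abs_norm_sq_coe_sub_sub_norm_sq_le (c : 𝕋) (t : ℝ) :
    |‖(t : 𝕋) - c‖ ^ 2 - ‖c‖ ^ 2| ≤ |t| := by
  have hdiff : |‖(t : 𝕋) - c‖ - ‖-c‖| ≤ |t| :=
    (abs_norm_sub_norm_le _ _).trans <| by
      simpa using QuotientAddGroup.norm_mk_le_norm (m := t)
  have hsum : ‖(t : 𝕋) - c‖ + ‖c‖ ≤ 1 := by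
    linarith [norm_one_le_half ((t : 𝕋) - c), norm_one_le_half c]
  rw [norm_neg] at hdiff
  calc |‖(t : 𝕋) - c‖ ^ 2 - ‖c‖ ^ 2|
      = |‖(t : 𝕋) - c‖ - ‖c‖| * (‖(t : 𝕋) - c‖ + ‖c‖) := by
        rw [← abs_of_nonneg (by positivity : 0 ≤ ‖(t : 𝕋) - c‖ + ‖c‖), ← abs_mul]
        ring_nf
    _ ≤ |t| * 1 := by gcongr
    _ = |t| := mul_one _

lemma abs_secondDiffNormSq_le (c : 𝕋) (s : ℝ) :
    |secondDiffNormSq c s| ≤ 2 * |s| := by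
  have hplus := abs_norm_sq_coe_sub_sub_norm_sq_le c s
  have hminus := abs_norm_sq_coe_sub_sub_norm_sq_le c (-s)
  rw [abs_neg] at hminus
  unfold secondDiffNormSq
  calc _ = |(‖(s : 𝕋) - c‖ ^ 2 - ‖c‖ ^ 2) +
        (‖((-s : ℝ) : 𝕋) - c‖ ^ 2 - ‖c‖ ^ 2)| := by ring_nf
    _ ≤ _ := (abs_add_le _ _).trans (by linarith)

lemma tendsto_secondDiffNormSq_div (c : 𝕋) :
    Tendsto (fun s => secondDiffNormSq c s / s) (𝓝[>] 0)
      (𝓝 (if c = ((1 / 2 : ℝ) : 𝕋) then -2 else 0)) := by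
  obtain ⟨u, ⟨hu₁, hu₂⟩, rfl⟩ : ∃ u ∈ Set.Ioc (-(1 / 2) : ℝ) (1 / 2),
      (u : 𝕋) = c := by
    have := coe_image_Ioc_eq (1 : ℝ) (-(1 / 2) : ℝ) ▸ Set.mem_univ c
    norm_num at this ⊢
    exact this
  have hnorm : ∀ t : ℝ, ‖(t : 𝕋) - u‖ = ‖((u - t : ℝ) : 𝕋)‖ := by
    intro t; rw [norm_sub_rev, coe_sub]
  have of_affine : ∀ L : ℝ, (∀ᶠ s in 𝓝[>] 0, secondDiffNormSq u s / s = 2 * s + L) →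
      Tendsto (fun s => secondDiffNormSq u s / s) (𝓝[>] 0) (𝓝 L) := fun L hL => by
    have : Tendsto (fun s : ℝ => 2 * s + L) (𝓝[>] 0) (𝓝 (2 * 0 + L)) :=
      ((continuous_const.mul continuous_id).add continuous_const).continuousWithinAt.tendsto
    simpa using this.congr' (hL.mono fun s hs => hs.symm)
  rcases hu₂.eq_or_lt with rfl | hu₂
  · rw [if_pos rfl]
    refine of_affine _ ?_
    filter_upwards [Ioo_mem_nhdsGT (show (0 : ℝ) < 1 / 2 by norm_num)] with s ⟨hs₀, hs₁⟩
    have hplus : ‖((1 / 2 - s : ℝ) : 𝕋)‖ = 1 / 2 - s := by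
      rw [norm_coe_one_eq_abs (by rw [abs_le]; constructor <;> linarith), abs_of_pos (by linarith)]
    have hminus : ‖((1 / 2 - -s : ℝ) : 𝕋)‖ = 1 / 2 - s := by
      rw [show (1 / 2 - -s : ℝ) = -(1 / 2 - s) + 1 by ring, coe_add_period, coe_neg, norm_neg,
        hplus]
    rw [secondDiffNormSq, hnorm, hnorm, hplus, hminus, norm_coe_one_eq_abs (by norm_num)]
    field_simp; norm_num; ring
  · have habs : |u| < 1 / 2 := abs_lt.mpr ⟨hu₁, hu₂⟩
    have hne : (u : 𝕋) ≠ ((1 / 2 : ℝ) : 𝕋) := fun h => by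
      have := congrArg norm h
      rw [norm_coe_one_eq_abs habs.le, norm_coe_one_eq_abs (by norm_num)] at this
      norm_num at this; linarith
    rw [if_neg hne]
    refine of_affine _ ?_
    filter_upwards [Ioo_mem_nhdsGT (show (0 : ℝ) < 1 / 2 - |u| by linarith)]
      with s ⟨hs₀, hs₁⟩
    have hsmall : ∀ t, |t| ≤ s → |u - t| ≤ 1 / 2 := fun t ht =>
      (abs_sub _ _).trans (by linarith)
    rw [secondDiffNormSq, hnorm, hnorm, norm_coe_one_eq_abs (hsmall s (abs_of_pos hs₀).le),
      norm_coe_one_eq_abs (hsmall (-s) (by rw [abs_neg, abs_of_pos hs₀])),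
      norm_coe_one_eq_abs habs.le]
    field_simp
    rw [sq_abs, sq_abs, sq_abs]; ring

end AddCircle

open AddCircle

lemma tendsto_integral_secondDiffNormSq_div {α : Type*} [MeasurableSpace α] (μ : Measure α)
    [IsFiniteMeasure μ] {f : α → 𝕋} (hf : Measurable f) :
    Tendsto (fun s => ∫ a, secondDiffNormSq (f a) s / s ∂μ) (𝓝[>] 0)
      (𝓝 (-2 * μ.real (f ⁻¹' {((1 / 2 : ℝ) : 𝕋)}))) := by
  have hlim : ∫ a, (f ⁻¹' {((1 / 2 : ℝ) : 𝕋)}).indicator (fun _ => (-2 : ℝ)) a ∂μ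
      = -2 * μ.real (f ⁻¹' {((1 / 2 : ℝ) : 𝕋)}) := by
    rw [integral_indicator_const _ (hf (measurableSet_singleton _)), smul_eq_mul, mul_comm]
  rw [← hlim]
  refine tendsto_integral_filter_of_dominated_convergence (fun _ => 2) ?_ ?_ (integrable_const 2) ?_
  · exact Eventually.of_forall fun s =>
      (((continuous_secondDiffNormSq s).div_const s).measurable.comp hf).aestronglyMeasurable
  · refine eventually_nhdsWithin_of_forall fun s (hs : 0 < s) => ae_of_all _ fun a => ?_
    rw [norm_div, Real.norm_eq_abs, Real.norm_eq_abs, abs_of_pos hs, div_le_iff₀ hs]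
    simpa [abs_of_pos hs] using abs_secondDiffNormSq_le (f a) s
  · refine ae_of_all _ fun a => ?_
    classical
    simpa [Set.indicator_apply] using tendsto_secondDiffNormSq_div (f a)

section
variable {n : ℕ}

lemma torusDist_sq (x y : Torus n) : torusDist x y ^ 2 = ∑ k, dist (x k) (y k) ^ 2 :=
  Real.sq_sqrt (by positivity)

lemma continuous_torusDist (x : Torus n) : Continuous (torusDist x) := by
  unfold torusDist; fun_prop

lemma torusPotential_two (μ : Measure (Torus n)) (x : Torus n) :
    torusPotential 2 μ x = ∫ y, torusDist x y ^ 2 ∂μ := by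
  simp only [torusPotential, Real.rpow_two]

lemma integrable_torusDist_sq (μ : Measure (Torus n)) [IsFiniteMeasure μ] (x : Torus n) :
    Integrable (fun y => torusDist x y ^ 2) μ :=
  ((continuous_torusDist x).pow 2).integrable_of_hasCompactSupport
    (HasCompactSupport.of_compactSpace _)

lemma torusDist_torusShift_sq (x y : Torus n) (j : Fin n) (s : ℝ) :
    torusDist (torusShift x j s) y ^ 2
      = torusDist x y ^ 2 - dist (x j) (y j) ^ 2 + ‖(s : 𝕋) - (y j - x j)‖ ^ 2 := by
  rw [torusDist_sq, torusDist_sq, ← Finset.add_sum_erase _ _ (Finset.mem_univ j),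
    ← Finset.add_sum_erase _ _ (Finset.mem_univ j)]
  have hoff : ∀ k ∈ Finset.univ.erase j, torusShift x j s k = x k := fun k hk => by
    simp [torusShift, Finset.ne_of_mem_erase hk]
  rw [Finset.sum_congr rfl fun k hk => by rw [hoff k hk]]
  simp only [torusShift, if_true, dist_eq_norm]
  rw [show x j + (s : 𝕋) - y j = s - (y j - x j) by abel]
  ring

lemma torusDist_sq_secondDiff (x y : Torus n) (j : Fin n) (s : ℝ) :
    torusDist (torusShift x j s) y ^ 2 - 2 * torusDist x y ^ 2 +
        torusDist (torusShift x j (-s)) y ^ 2 = secondDiffNormSq (y j - x j) s := by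
  rw [torusDist_torusShift_sq, torusDist_torusShift_sq, secondDiffNormSq, dist_comm, dist_eq_norm]
  ring

lemma torusPotential_two_secondDiff (μ : Measure (Torus n)) [IsFiniteMeasure μ] (x : Torus n)
    (j : Fin n) (s : ℝ) :
    torusPotential 2 μ (torusShift x j s) - 2 * torusPotential 2 μ x +
        torusPotential 2 μ (torusShift x j (-s))
      = ∫ y, secondDiffNormSq (y j - x j) s ∂μ := by
  simp only [torusPotential_two, ← torusDist_sq_secondDiff]
  have hint := integrable_torusDist_sq μ
  have hsub : Integrable (fun y => torusDist (torusShift x j s) y ^ 2 - 2 * torusDist x y ^ 2) μ :=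
    (hint _).sub ((hint x).const_mul 2)
  rw [integral_add hsub (hint _), integral_sub (hint _) ((hint x).const_mul 2), integral_const_mul]

end

theorem torus_potential_second_difference_two_general {n : ℕ}
    (x : Torus n) (j : Fin n) (μ : Measure (Torus n)) (hμ : IsProbabilityMeasure μ) :
    Tendsto (fun s : ℝ =>
        (torusPotential 2 μ (torusShift x j s) - 2 * torusPotential 2 μ x +
          torusPotential 2 μ (torusShift x j (-s))) / s)
      (nhdsWithin 0 (Set.Ioi 0))
      (nhds (-2 * (μ (torusHyperplane (torusShift x j (1 / 2)) j)).toReal)) := by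
  have hH : torusHyperplane (torusShift x j (1 / 2)) j
      = (fun y : Torus n => y j - x j) ⁻¹' {((1 / 2 : ℝ) : 𝕋)} := by
    ext y; simp [torusHyperplane, torusShift, sub_eq_iff_eq_add']
  rw [hH, ← measureReal_def]
  refine (tendsto_integral_secondDiffNormSq_div μ (by fun_prop)).congr fun s => ?_
  rw [integral_div, torusPotential_two_secondDiff]

/-- Second-difference formula for the Wasserstein potential on the torus,
case `p = 2`: the limit recovers the mass of the hyperplane `H(x + ½e^j, j)`. -/
theorem torus_potential_second_difference_two {n : ℕ} (hn : 2 ≤ n)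
    (x : Torus n) (j : Fin n) (μ : Measure (Torus n)) (hμ : IsProbabilityMeasure μ) :
    Tendsto (fun s : ℝ =>
        (torusPotential 2 μ (torusShift x j s) - 2 * torusPotential 2 μ x +
          torusPotential 2 μ (torusShift x j (-s))) / s)
      (nhdsWithin 0 (Set.Ioi 0))
      (nhds (-2 * (μ (torusHyperplane (torusShift x j (1 / 2)) j)).toReal)) :=
  torus_potential_second_difference_two_general x j μ hμ
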